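/- For every integer n ≥ 0, every real N > 0 and every real X, the relativistic Hermite polynomial has the moment representation H_n^N(X) = ((2N)_n/N^{n/2}) · ∫_{-1}^{1} (X/√N + i z)^n · f^{(N)}(z) dz. -/

import Mathlib

/-!
Expand `(X/√N + i z)^n` binomially. The density `f^(N)` is even, so its odd moments vanish, and
the substitution `x = z²` turns its even moments into Beta integrals:
`∫ z^(2k) f^(N)(z) dz = B(k + 1/2, N) / B(1/2, N) = (1/2)_k / (N + 1/2)_k`.
With `(2k)! = 4^k k! (1/2)_k` the binomial sum becomes the defining sum of `H_n^N`.
-/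

open Finset Polynomial MeasureTheory

/-- The relativistic Hermite polynomial `H_n^N(X)` (real parameter `N > 0`). -/
noncomputable def RH (n : ℕ) (N X : ℝ) : ℝ :=
  ((ascPochhammer ℝ n).eval (2 * N) / (2 * Real.sqrt N) ^ n) *
    ∑ k ∈ Finset.range (n / 2 + 1),
      (-1) ^ k / (ascPochhammer ℝ k).eval (N + 1 / 2) *
        ((n.factorial : ℝ) / (((n - 2 * k).factorial : ℝ) * (k.factorial : ℝ))) *
        (2 * X / Real.sqrt N) ^ (n - 2 * k)

/-- The symmetric Student-r density
`f^(N)(z) = (Γ(N+1/2)/(Γ(N)Γ(1/2))) (1-z²)^(N-1)` on `[-1,1]`. -/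
noncomputable def studentPdf (N z : ℝ) : ℝ :=
  if -1 ≤ z ∧ z ≤ 1 then
    Real.Gamma (N + 1 / 2) / (Real.Gamma N * Real.Gamma (1 / 2)) * (1 - z ^ 2) ^ (N - 1)
  else 0

open ProbabilityTheory

section Symmetric

variable {E : Type*} [NormedAddCommGroup E] {f : ℝ → E}

theorem intervalIntegral_neg_self_eq_zero_of_odd [NormedSpace ℝ E] (hf : ∀ x, f (-x) = -f x)
    (a : ℝ) : ∫ x in -a..a, f x = 0 := by
  have h := intervalIntegral.integral_comp_neg (a := -a) (b := a) f
  simp only [neg_neg, hf, intervalIntegral.integral_neg] at h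
  have h2 : (2 : ℝ) • ∫ x in -a..a, f x = 0 := by
    rw [two_smul]
    nth_rewrite 1 [← h]
    exact neg_add_cancel _
  exact (smul_eq_zero.mp h2).resolve_left two_ne_zero

theorem IntervalIntegrable.neg_of_even (hf : ∀ x, f (-x) = f x) {a : ℝ}
    (hfi : IntervalIntegrable f volume 0 a) : IntervalIntegrable f volume (-a) 0 := by
  simpa [hf] using ((IntervalIntegrable.iff_comp_neg).mp hfi).symm

theorem intervalIntegral_neg_self_of_even [NormedSpace ℝ E] (hf : ∀ x, f (-x) = f x) {a : ℝ}
    (hfi : IntervalIntegrable f volume 0 a) :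
    ∫ x in -a..a, f x = (2 : ℝ) • ∫ x in 0..a, f x := by
  have hleft : ∫ x in -a..0, f x = ∫ x in 0..a, f x := by
    simpa [hf] using intervalIntegral.integral_comp_neg (a := -a) (b := 0) f
  rw [← intervalIntegral.integral_add_adjacent_intervals (hfi.neg_of_even hf) hfi, hleft,
    two_smul]

end Symmetric

theorem integral_rpow_mul_one_sub_rpow {a b : ℝ} (ha : 0 < a) (hb : 0 < b) :
    ∫ x in (0 : ℝ)..1, x ^ (a - 1) * (1 - x) ^ (b - 1) = beta a b := by
  rw [beta_eq_betaIntegralReal a b ha hb, Complex.betaIntegral,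
    ← Complex.ofReal_re (∫ x in _..1, _), ← intervalIntegral.integral_ofReal]
  congr 1
  refine intervalIntegral.integral_congr fun x hx => ?_
  rw [Set.uIcc_of_le zero_le_one] at hx
  push_cast
  rw [Complex.ofReal_cpow hx.1, Complex.ofReal_cpow (sub_nonneg.mpr hx.2)]
  push_cast
  rfl

-- The Jacobian change of variables `x = z²` needs no integrability: without it both sides are `0`.
theorem integral_pow_mul_one_sub_sq_rpow_zero_one (k : ℕ) (q : ℝ) :
    ∫ z in (0 : ℝ)..1, z ^ (2 * k) * (1 - z ^ 2) ^ q =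
      (1 / 2) * ∫ x in (0 : ℝ)..1, x ^ ((k : ℝ) - 1 / 2) * (1 - x) ^ q := by
  have himage : (fun z : ℝ => z ^ 2) '' Set.Ioo 0 1 = Set.Ioo 0 1 := by
    ext x
    constructor
    · rintro ⟨z, hz, rfl⟩
      exact ⟨by nlinarith [hz.1], by nlinarith [hz.1, hz.2]⟩
    · intro hx
      refine ⟨√x, ⟨Real.sqrt_pos.mpr hx.1, ?_⟩, Real.sq_sqrt hx.1.le⟩
      exact (Real.sqrt_lt' one_pos).mpr (by simpa using hx.2)
  have hcov := integral_image_eq_integral_abs_deriv_smul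
    (measurableSet_Ioo (a := (0 : ℝ)) (b := 1))
    (fun z _ => (hasDerivAt_pow 2 z).hasDerivWithinAt)
    ((pow_left_strictMonoOn₀ two_ne_zero).injOn.mono fun z hz => le_of_lt hz.1)
    (fun x => x ^ ((k : ℝ) - 1 / 2) * (1 - x) ^ q)
  rw [himage] at hcov
  simp only [intervalIntegral.integral_of_le zero_le_one, integral_Ioc_eq_integral_Ioo, hcov,
    ← MeasureTheory.integral_const_mul]
  refine setIntegral_congr_fun measurableSet_Ioo fun z hz => ?_
  have hz0 : 0 < z := hz.1
  have hpow : (z ^ 2) ^ ((k : ℝ) - 1 / 2) = z ^ (2 * k) / z := by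
    rw [Real.rpow_sub (by positivity), Real.rpow_natCast, ← Real.sqrt_eq_rpow,
      Real.sqrt_sq hz0.le, pow_mul]
  simp only [hpow, smul_eq_mul]
  rw [abs_of_pos (by positivity)]
  field_simp
  ring

theorem intervalIntegrable_one_sub_sq_rpow {q : ℝ} (hq : -1 < q) :
    IntervalIntegrable (fun z : ℝ => (1 - z ^ 2) ^ q) volume (-1) 1 := by
  have hfactor : IntervalIntegrable (fun z : ℝ => (1 - z) ^ q * (1 + z) ^ q) volume 0 1 := by
    refine IntervalIntegrable.mul_continuousOn ?_ ?_
    · have := (intervalIntegral.intervalIntegrable_rpow' hq (a := 0) (b := 1)).comp_sub_left 1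
      simpa using this.symm
    · refine ContinuousOn.rpow_const (by fun_prop) fun x hx => Or.inl ?_
      rw [Set.uIcc_of_le zero_le_one] at hx
      linarith [hx.1]
  have hright : IntervalIntegrable (fun z : ℝ => (1 - z ^ 2) ^ q) volume 0 1 := by
    refine hfactor.congr_uIoo fun z hz => ?_
    rw [Set.uIoo_of_le zero_le_one] at hz
    dsimp only
    rw [← Real.mul_rpow (by linarith [hz.2]) (by linarith [hz.1])]
    ring_nf
  exact (hright.neg_of_even fun z => by simp).trans hright

theorem integral_pow_mul_one_sub_sq_rpow {q : ℝ} (hq : -1 < q) (k : ℕ) :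
    ∫ z in (-1 : ℝ)..1, z ^ (2 * k) * (1 - z ^ 2) ^ q = beta (k + 1 / 2) (q + 1) := by
  have hint : IntervalIntegrable (fun z : ℝ => z ^ (2 * k) * (1 - z ^ 2) ^ q) volume 0 1 :=
    ((intervalIntegrable_one_sub_sq_rpow hq).mono_set
      (by simp [Set.uIcc_of_le, Set.Icc_subset_Icc])).continuousOn_mul
      (continuous_pow _).continuousOn
  rw [intervalIntegral_neg_self_of_even (fun z => by simp [pow_mul]) hint,
    integral_pow_mul_one_sub_sq_rpow_zero_one, ← integral_rpow_mul_one_sub_rpow (by positivity)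
    (by linarith)]
  simp only [smul_eq_mul, add_sub_cancel_right]
  ring_nf

theorem Real.Gamma_add_nat_eq_mul_ascPochhammer {x : ℝ} (hx : ∀ m : ℕ, x ≠ -m) (k : ℕ) :
    Real.Gamma (x + k) = Real.Gamma x * (ascPochhammer ℝ k).eval x := by
  induction k with
  | zero => simp
  | succ k ih =>
    have hxk : x + k ≠ 0 := fun h => hx k (eq_neg_of_add_eq_zero_left h)
    rw [Nat.cast_succ, ← add_assoc, Real.Gamma_add_one hxk, ih, ascPochhammer_succ_eval]
    ring

theorem beta_add_nat_div_beta {a b : ℝ} (ha : 0 < a) (hb : 0 < b) (k : ℕ) :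
    beta (a + k) b / beta a b =
      (ascPochhammer ℝ k).eval a / (ascPochhammer ℝ k).eval (a + b) := by
  have hnat {x : ℝ} (hx : 0 < x) (m : ℕ) : x ≠ -m :=
    ((neg_nonpos.mpr m.cast_nonneg).trans_lt hx).ne'
  rw [beta, beta, add_right_comm, Real.Gamma_add_nat_eq_mul_ascPochhammer (hnat ha),
    Real.Gamma_add_nat_eq_mul_ascPochhammer (hnat (add_pos ha hb))]
  have := Real.Gamma_pos_of_pos ha
  have := Real.Gamma_pos_of_pos hb
  have := Real.Gamma_pos_of_pos (add_pos ha hb)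
  have := ascPochhammer_pos k (a + b) (add_pos ha hb)
  field_simp

theorem ascPochhammer_eval_half_mul_four_pow_mul_factorial (k : ℕ) :
    (ascPochhammer ℝ k).eval (1 / 2) * 4 ^ k * k.factorial = (2 * k).factorial := by
  induction k with
  | zero => simp
  | succ k ih =>
    rw [ascPochhammer_succ_eval, Nat.mul_succ, Nat.factorial_succ, Nat.factorial_succ,
      Nat.factorial_succ]
    push_cast
    linear_combination (4 * (1 / 2 + (k : ℝ)) * (k + 1)) * ih

theorem studentPdf_of_mem_Icc (N : ℝ) {z : ℝ} (hz : z ∈ Set.Icc (-1) 1) :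
    studentPdf N z = (1 - z ^ 2) ^ (N - 1) / beta (1 / 2) N := by
  rw [studentPdf, if_pos (Set.mem_Icc.mp hz), beta, add_comm, div_div_eq_mul_div]
  ring

theorem studentPdf_neg (N z : ℝ) : studentPdf N (-z) = studentPdf N z := by
  simp only [studentPdf, neg_sq, neg_le, neg_neg, and_comm]

theorem intervalIntegrable_pow_mul_studentPdf {N : ℝ} (hN : 0 < N) (j : ℕ) :
    IntervalIntegrable (fun z => z ^ j * studentPdf N z) volume (-1) 1 := by
  have hpdf : IntervalIntegrable (studentPdf N) volume (-1) 1 :=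
    ((intervalIntegrable_one_sub_sq_rpow (by linarith : -1 < N - 1)).div_const _).congr_uIoo
      fun z hz => (studentPdf_of_mem_Icc N (Set.Ioo_subset_Icc_self (by simpa using hz))).symm
  exact hpdf.continuousOn_mul (continuous_pow j).continuousOn

theorem integral_pow_mul_studentPdf_of_odd (N : ℝ) {j : ℕ} (hj : Odd j) :
    ∫ z in (-1 : ℝ)..1, z ^ j * studentPdf N z = 0 :=
  intervalIntegral_neg_self_eq_zero_of_odd (fun z => by rw [hj.neg_pow, studentPdf_neg, neg_mul]) 1

theorem integral_pow_two_mul_mul_studentPdf {N : ℝ} (hN : 0 < N) (k : ℕ) :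
    ∫ z in (-1 : ℝ)..1, z ^ (2 * k) * studentPdf N z =
      (ascPochhammer ℝ k).eval (1 / 2) / (ascPochhammer ℝ k).eval (N + 1 / 2) := by
  have hdensity : ∫ z in (-1 : ℝ)..1, z ^ (2 * k) * studentPdf N z =
      (∫ z in (-1 : ℝ)..1, z ^ (2 * k) * (1 - z ^ 2) ^ (N - 1)) / beta (1 / 2) N := by
    rw [← intervalIntegral.integral_div]
    refine intervalIntegral.integral_congr fun z hz => ?_
    rw [Set.uIcc_of_le (by norm_num)] at hz
    simp only [studentPdf_of_mem_Icc N hz, mul_div_assoc]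
  rw [hdensity, integral_pow_mul_one_sub_sq_rpow (by linarith), sub_add_cancel, add_comm,
    beta_add_nat_div_beta one_half_pos hN, add_comm]

theorem Finset.sum_range_succ_eq_sum_two_mul_of_odd {M : Type*} [AddCommMonoid M] {f : ℕ → M}
    (hf : ∀ j, Odd j → f j = 0) (n : ℕ) :
    ∑ j ∈ range (n + 1), f j = ∑ k ∈ range (n / 2 + 1), f (2 * k) := by
  rw [← Finset.sum_image (g := (2 * ·)) fun k _ l _ h => by simpa using h]
  refine (Finset.sum_subset (fun j hj => ?_) fun j hj hj' => hf j ?_).symm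
  · obtain ⟨k, hk, rfl⟩ := Finset.mem_image.mp hj
    simp only [Finset.mem_range] at hk ⊢
    omega
  · rcases Nat.even_or_odd' j with ⟨k, rfl | rfl⟩
    · simp only [Finset.mem_image, Finset.mem_range, not_exists, not_and] at hj hj'
      exact absurd rfl (hj' k (by omega))
    · exact odd_two_mul_add_one k

theorem integral_ofReal_add_I_mul_pow_mul {ρ : ℝ → ℝ} {a b : ℝ}
    (hρ : ∀ j : ℕ, IntervalIntegrable (fun z => z ^ j * ρ z) volume a b)
    (hodd : ∀ j : ℕ, Odd j → ∫ z in a..b, z ^ j * ρ z = 0) (x : ℝ) (n : ℕ) :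
    ∫ z in a..b, ((x : ℂ) + Complex.I * z) ^ n * (ρ z : ℂ) =
      ((∑ k ∈ range (n / 2 + 1), (-1) ^ k * n.choose (2 * k) * x ^ (n - 2 * k) *
        ∫ z in a..b, z ^ (2 * k) * ρ z : ℝ) : ℂ) := by
  have hexpand : ∀ z : ℝ, ((x : ℂ) + Complex.I * z) ^ n * (ρ z : ℂ) =
      ∑ j ∈ range (n + 1),
        Complex.I ^ j * x ^ (n - j) * n.choose j * ((z ^ j * ρ z : ℝ) : ℂ) := by
    intro z
    rw [add_comm, add_pow, Finset.sum_mul]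
    refine Finset.sum_congr rfl fun j _ => ?_
    push_cast
    ring
  simp_rw [hexpand]
  rw [intervalIntegral.integral_finsetSum fun j _ => IntervalIntegrable.const_mul
    ⟨(hρ j).1.ofReal, (hρ j).2.ofReal⟩ _]
  simp_rw [intervalIntegral.integral_const_mul, intervalIntegral.integral_ofReal]
  rw [Finset.sum_range_succ_eq_sum_two_mul_of_odd (fun j hj => by simp [hodd j hj])]
  push_cast
  refine Finset.sum_congr rfl fun k _ => ?_
  rw [pow_mul, Complex.I_sq]
  ring

theorem factorial_div_factorial_mul_factorial_eq {n k : ℕ} (hk : 2 * k ≤ n) :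
    (n.factorial : ℝ) / ((n - 2 * k).factorial * k.factorial) =
      n.choose (2 * k) * (ascPochhammer ℝ k).eval (1 / 2) * 4 ^ k := by
  have hchoose : (n.choose (2 * k) * (2 * k).factorial * (n - 2 * k).factorial : ℝ) =
      n.factorial := by
    exact_mod_cast Nat.choose_mul_factorial_mul_factorial hk
  rw [div_eq_iff (by positivity), ← hchoose,
    ← ascPochhammer_eval_half_mul_four_pow_mul_factorial]
  ring

theorem RH_eq_sum (n : ℕ) {N : ℝ} (hN : 0 < N) (X : ℝ) :
    RH n N X = (ascPochhammer ℝ n).eval (2 * N) / N ^ ((n : ℝ) / 2) *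
      ∑ k ∈ range (n / 2 + 1), (-1) ^ k * n.choose (2 * k) * (X / √N) ^ (n - 2 * k) *
        ((ascPochhammer ℝ k).eval (1 / 2) / (ascPochhammer ℝ k).eval (N + 1 / 2)) := by
  have hsqrt : (2 * √N) ^ n = 2 ^ n * N ^ ((n : ℝ) / 2) := by
    rw [mul_pow, Real.rpow_div_two_eq_sqrt _ hN.le, Real.rpow_natCast]
  rw [RH, hsqrt, Finset.mul_sum, Finset.mul_sum]
  refine Finset.sum_congr rfl fun k hk => ?_
  have h2k : 2 * k ≤ n := by
    rw [Finset.mem_range] at hk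
    omega
  have htwo : (2 : ℝ) ^ (n - 2 * k) * 4 ^ k = 2 ^ n := by
    rw [show (4 : ℝ) = 2 ^ 2 by norm_num, ← pow_mul, ← pow_add, Nat.sub_add_cancel h2k]
  have := ascPochhammer_pos k (N + 1 / 2) (by positivity)
  rw [factorial_div_factorial_mul_factorial_eq h2k, mul_div_assoc, mul_pow, ← htwo]
  field_simp

/-- Moment representation:
`H_n^N(X) = ((2N)_n / N^(n/2)) ∫_{-1}^1 (X/√N + i z)^n f^(N)(z) dz`. -/
theorem RH_moment_representation (n : ℕ) (N : ℝ) (hN : 0 < N) (X : ℝ) :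
    (RH n N X : ℂ) =
      (((ascPochhammer ℝ n).eval (2 * N) / N ^ ((n : ℝ) / 2) : ℝ) : ℂ) *
        ∫ z in (-1 : ℝ)..1,
          (((X / Real.sqrt N : ℝ) : ℂ) + Complex.I * (z : ℂ)) ^ n * ((studentPdf N z : ℝ) : ℂ) := by
  rw [integral_ofReal_add_I_mul_pow_mul (intervalIntegrable_pow_mul_studentPdf hN)
    (fun _ hj => integral_pow_mul_studentPdf_of_odd N hj), RH_eq_sum n hN]
  simp only [integral_pow_two_mul_mul_studentPdf hN, Complex.ofReal_mul]
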